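/- arXiv:2502.04540 — 3 statements merged into one kernel-verified Lean document; each statement's English description precedes it below -/
import Mathlib

section
/- In the above setting, the maps ι_j : L^j ≀ ℤ → L ≀ ℤ are (ρ_j)-quasi-surjective with ρ_j := j: an element (b, n) ∈ L ≀ ℤ lies in the image of ι_j if and only if n is a multiple of j, and for every (b, n) ∈ L ≀ ℤ there exists an element in the image of ι_j at distance at most j from (b, n). -/
/-- A lamplighter path of length `n` from configuration `(f, p)` to `(f', p')` in the
lamplighter group `A ≀ ℤ`: a walk of the lamplighter in `ℤ` from `p` to `p'` taking
steps of length `1` and visiting every position where the lamp states differ. -/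
def IsLampPath {A : Type*} (f f' : ℤ → A) (p p' : ℤ) (n : ℕ) (q : ℕ → ℤ) : Prop :=
  q 0 = p ∧ q n = p' ∧ (∀ i < n, |q (i + 1) - q i| = 1) ∧
    ∀ k : ℤ, f k ≠ f' k → ∃ i ≤ n, q i = k

/-- The word metric on the lamplighter group `A ≀ ℤ` with respect to the generating set
`A × {t}`: the length of the shortest lamplighter path between the two configurations. -/
noncomputable def lampDist {A : Type*} (f f' : ℤ → A) (p p' : ℤ) : ℕ :=
  sInf {n | ∃ q : ℕ → ℤ, IsLampPath f f' p p' n q}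

/-- The packing map `ι_j : L^j ≀ ℤ → L ≀ ℤ` on lamp configurations:
`b_{jk+i} = a_k^{(i)}`. -/
def packLamps (L : Type*) (j : ℕ) (hj : 0 < j) (a : ℤ → Fin j → L) : ℤ → L :=
  fun m => a (m.ediv j)
    ⟨(m % (j:ℤ)).toNat, by
      have h1 : (0:ℤ) < (j:ℤ) := by exact_mod_cast hj
      have h2 := Int.emod_nonneg m (ne_of_gt h1)
      have h3 := Int.emod_lt_of_pos m h1
      omega⟩

/-- Quasi-surjectivity of the packing maps `ι_j : L^j ≀ ℤ → L ≀ ℤ`: an element `(b, n)`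
lies in the image of `ι_j` iff `j ∣ n`, and every element of `L ≀ ℤ` is within
distance `j` of the image. -/
theorem lamplighter_quasi_surjective
    (L : Type) [Group L] (j : ℕ) (hj : 0 < j)
    (b : ℤ → L) (n : ℤ) (hb : {k : ℤ | b k ≠ 1}.Finite) :
    ((∃ (a : ℤ → Fin j → L) (m : ℤ), packLamps L j hj a = b ∧ (j:ℤ) * m = n) ↔ (j:ℤ) ∣ n) ∧
    ∃ (a : ℤ → Fin j → L) (m : ℤ),
      lampDist (packLamps L j hj a) b ((j:ℤ) * m) n ≤ j := by
  have hpack : packLamps L j hj (fun k i => b ((j:ℤ) * k + i)) = b := by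
    funext x
    have h1 : (0:ℤ) < (j:ℤ) := by exact_mod_cast hj
    have h2 := Int.emod_nonneg x (ne_of_gt h1)
    simp only [packLamps]
    have : ((j:ℤ) * (x.ediv j) + ((x % (j:ℤ)).toNat : ℤ)) = x := by
      rw [Int.toNat_of_nonneg h2]
      exact Int.mul_ediv_add_emod x j
    rw [this]
  constructor
  · constructor
    · rintro ⟨a, m, -, hm⟩; exact ⟨m, hm.symm⟩
    · rintro ⟨m, hm⟩
      exact ⟨fun k i => b ((j:ℤ) * k + i), m, hpack, hm.symm⟩
  · refine ⟨fun k i => b ((j:ℤ) * k + i), n.ediv j, ?_⟩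
    rw [hpack]
    have h1 : (0:ℤ) < (j:ℤ) := by exact_mod_cast hj
    have h2 := Int.emod_nonneg n (ne_of_gt h1)
    have h3 := Int.emod_lt_of_pos n h1
    set r : ℕ := (n % (j:ℤ)).toNat with hr
    have hmem : r ∈ {m | ∃ q : ℕ → ℤ, IsLampPath b b ((j:ℤ) * (n.ediv j)) n m q} := by
      refine ⟨fun i => (j:ℤ) * (n.ediv j) + i, ?_, ?_, ?_, ?_⟩
      · simp
      · show (j:ℤ) * n.ediv (j:ℤ) + (((n % (j:ℤ)).toNat : ℕ) : ℤ) = n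
        have h4 : n.ediv (j:ℤ) = n / (j:ℤ) := rfl
        rw [h4]
        have h5 := Int.mul_ediv_add_emod n (j:ℤ)
        omega
      · intro i _
        push_cast
        ring_nf
        simp
      · intro k hk; exact absurd rfl hk
    calc lampDist b b ((j:ℤ) * (n.ediv j)) n ≤ r := Nat.sInf_le hmem
      _ ≤ j := by omega
end

section
/- The hyperbolic plane ℍ² does not admit a surjective homothety: there is no surjective map h : ℍ² → ℍ² and μ > 1 such that d(h(x), h(y)) = μ · d(x, y) for all x, y ∈ ℍ². -/
open Real UpperHalfPlane

noncomputable section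

namespace NoHomothety

/-- Minkowski hyperboloid embedding of the upper half-plane into `ℝ³`. -/
def mink (z : ℍ) : Fin 3 → ℝ :=
  ![(z.re ^ 2 + z.im ^ 2 + 1) / (2 * z.im), z.re / z.im,
    (z.re ^ 2 + z.im ^ 2 - 1) / (2 * z.im)]

/-- The Minkowski pairing reproduces `cosh` of the hyperbolic distance. -/
lemma mink_pairing (z w : ℍ) :
    mink z 0 * mink w 0 - mink z 1 * mink w 1 - mink z 2 * mink w 2
      = Real.cosh (dist z w) := by
  rw [UpperHalfPlane.cosh_dist']
  have hz := z.im_pos.ne'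
  have hw := w.im_pos.ne'
  simp only [mink, Matrix.cons_val_zero, Matrix.cons_val_one, Matrix.head_cons,
    Matrix.cons_val_two, Matrix.tail_cons]
  field_simp
  ring

/-- Any four points of the hyperbolic plane satisfy a nontrivial linear relation among
the `cosh` of their mutual distances. -/
lemma exists_dep (p : Fin 4 → ℍ) :
    ∃ c : Fin 4 → ℝ, (∃ i, c i ≠ 0) ∧
      ∀ j, ∑ i, c i * Real.cosh (dist (p i) (p j)) = 0 := by
  have hnli : ¬ LinearIndependent ℝ (fun i => mink (p i)) := by
    intro H
    have h1 := H.fintype_card_le_finrank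
    rw [Module.finrank_fin_fun] at h1
    simp at h1
  obtain ⟨g, hsum, i, hi⟩ := Fintype.not_linearIndependent_iff.mp hnli
  refine ⟨g, ⟨i, hi⟩, fun j => ?_⟩
  have h0 : ∑ k, g k * mink (p k) 0 = 0 := by
    have := congrFun hsum 0
    simpa [Finset.sum_apply] using this
  have h1 : ∑ k, g k * mink (p k) 1 = 0 := by
    have := congrFun hsum 1
    simpa [Finset.sum_apply] using this
  have h2 : ∑ k, g k * mink (p k) 2 = 0 := by
    have := congrFun hsum 2
    simpa [Finset.sum_apply] using this
  have key : ∀ k, Real.cosh (dist (p k) (p j))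
      = mink (p k) 0 * mink (p j) 0 - mink (p k) 1 * mink (p j) 1
        - mink (p k) 2 * mink (p j) 2 := fun k => (mink_pairing _ _).symm
  simp only [key]
  rw [Fin.sum_univ_four] at h0 h1 h2 ⊢
  linear_combination (mink (p j) 0) * h0 - (mink (p j) 1) * h1 - (mink (p j) 2) * h2

/-- From the linear relation: if four points have the distance pattern of a vertex pair
`(p 0, p 1)` at distance `2t`, midpoint `p 2` at distance `t` from each, and a point `p 3`
with `dist (p 3) (p 2) = t` and equal distances to `p 0` and `p 1`, then
`cosh (dist (p 3) (p 0)) = cosh t ^ 2`. -/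
lemma cosh_relation (p : Fin 4 → ℍ) (A C : ℝ) (hA : 1 < A)
    (h01 : Real.cosh (dist (p 0) (p 1)) = 2 * A ^ 2 - 1)
    (h02 : Real.cosh (dist (p 0) (p 2)) = A)
    (h12 : Real.cosh (dist (p 1) (p 2)) = A)
    (h23 : Real.cosh (dist (p 2) (p 3)) = A)
    (h03 : Real.cosh (dist (p 0) (p 3)) = C)
    (h13 : Real.cosh (dist (p 1) (p 3)) = C) :
    C = A ^ 2 := by
  obtain ⟨c, ⟨i, hi⟩, hrel⟩ := exists_dep p
  have e0 := hrel 0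
  have e1 := hrel 1
  have e2 := hrel 2
  have e3 := hrel 3
  rw [Fin.sum_univ_four] at e0 e1 e2 e3
  rw [show dist (p 1) (p 0) = dist (p 0) (p 1) from dist_comm _ _] at e0
  rw [show dist (p 2) (p 0) = dist (p 0) (p 2) from dist_comm _ _] at e0
  rw [show dist (p 3) (p 0) = dist (p 0) (p 3) from dist_comm _ _] at e0
  rw [show dist (p 2) (p 1) = dist (p 1) (p 2) from dist_comm _ _] at e1
  rw [show dist (p 3) (p 1) = dist (p 1) (p 3) from dist_comm _ _] at e1
  rw [show dist (p 3) (p 2) = dist (p 2) (p 3) from dist_comm _ _] at e2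
  simp only [dist_self, Real.cosh_zero, h01, h02, h12, h23, h03, h13] at e0 e1 e2 e3
  -- e0 : c 0 * 1 + c 1 * (2A²-1) + c 2 * A + c 3 * C = 0
  -- e1 : c 0 * (2A²-1) + c 1 * 1 + c 2 * A + c 3 * C = 0
  -- e2 : c 0 * A + c 1 * A + c 2 * 1 + c 3 * A = 0
  -- e3 : c 0 * C + c 1 * C + c 2 * A + c 3 * 1 = 0
  have hc01 : c 0 = c 1 := by
    have hfac : (c 0 - c 1) * (2 - 2 * A ^ 2) = 0 := by linear_combination e0 - e1
    have hne : (2 - 2 * A ^ 2) ≠ 0 := by nlinarith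
    have := mul_eq_zero.mp hfac
    rcases this with h | h
    · linarith [sub_eq_zero.mp h]
    · exact absurd h hne
  have k1 : c 3 * (C - A ^ 2) = 0 := by
    linear_combination e0 - A * e2 + (A ^ 2 - 1) * hc01
  have k2 : 2 * c 0 * (C - A ^ 2) + c 3 * (1 - A ^ 2) = 0 := by
    linear_combination e3 - A * e2 + (C - A ^ 2) * hc01
  by_contra hC
  have hCA : C - A ^ 2 ≠ 0 := sub_ne_zero.mpr hC
  have hc3 : c 3 = 0 := by
    rcases mul_eq_zero.mp k1 with h | h
    · exact h
    · exact absurd h hCA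
  have hc0 : c 0 = 0 := by
    rw [hc3] at k2
    have : 2 * c 0 * (C - A ^ 2) = 0 := by linarith
    rcases mul_eq_zero.mp this with h | h
    · rcases mul_eq_zero.mp h with h2 | h2
      · norm_num at h2
      · exact h2
    · exact absurd h hCA
  have hc1 : c 1 = 0 := hc01 ▸ hc0
  have hc2 : c 2 = 0 := by
    rw [hc0, hc1, hc3] at e2
    linarith
  fin_cases i <;> simp_all

/-- The point `i`. -/
def ptI : ℍ := ⟨Complex.I, by simp⟩

/-- The point `e^{-r} i`. -/
def ptX (r : ℝ) : ℍ := ⟨⟨0, Real.exp (-r)⟩, by exact Real.exp_pos _⟩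

/-- The point `e^{r} i`. -/
def ptY (r : ℝ) : ℍ := ⟨⟨0, Real.exp r⟩, by exact Real.exp_pos _⟩

/-- The point `tanh r + i / cosh r`, on the unit semicircle. -/
def ptZ (r : ℝ) : ℍ :=
  ⟨⟨Real.sinh r / Real.cosh r, 1 / Real.cosh r⟩, by
    have := Real.cosh_pos (x := r); positivity⟩

@[simp] lemma ptI_re : (ptI : ℍ).re = 0 := by simp [ptI, UpperHalfPlane.re, UpperHalfPlane.coe]
@[simp] lemma ptI_im : (ptI : ℍ).im = 1 := by simp [ptI, UpperHalfPlane.im, UpperHalfPlane.coe]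
@[simp] lemma ptX_re (r : ℝ) : (ptX r).re = 0 := rfl
@[simp] lemma ptX_im (r : ℝ) : (ptX r).im = Real.exp (-r) := rfl
@[simp] lemma ptY_re (r : ℝ) : (ptY r).re = 0 := rfl
@[simp] lemma ptY_im (r : ℝ) : (ptY r).im = Real.exp r := rfl
@[simp] lemma ptZ_re (r : ℝ) : (ptZ r).re = Real.sinh r / Real.cosh r := rfl
@[simp] lemma ptZ_im (r : ℝ) : (ptZ r).im = 1 / Real.cosh r := rfl

lemma cosh_XI (r : ℝ) : Real.cosh (dist (ptX r) ptI) = Real.cosh r := by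
  rw [UpperHalfPlane.cosh_dist']
  simp only [ptX_re, ptX_im, ptI_re, ptI_im, Real.cosh_eq, Real.exp_neg]
  have := Real.exp_pos r
  field_simp
  ring

lemma cosh_YI (r : ℝ) : Real.cosh (dist (ptY r) ptI) = Real.cosh r := by
  rw [UpperHalfPlane.cosh_dist']
  simp only [ptY_re, ptY_im, ptI_re, ptI_im, Real.cosh_eq, Real.exp_neg]
  have := Real.exp_pos r
  field_simp
  ring

lemma cosh_XY (r : ℝ) :
    Real.cosh (dist (ptX r) (ptY r)) = 2 * Real.cosh r ^ 2 - 1 := by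
  rw [UpperHalfPlane.cosh_dist']
  simp only [ptX_re, ptX_im, ptY_re, ptY_im, Real.cosh_eq, Real.exp_neg]
  have := Real.exp_pos r
  field_simp
  ring

lemma cosh_ZI (r : ℝ) : Real.cosh (dist (ptZ r) ptI) = Real.cosh r := by
  rw [UpperHalfPlane.cosh_dist']
  simp only [ptZ_re, ptZ_im, ptI_re, ptI_im, Real.cosh_eq, Real.sinh_eq, Real.exp_neg]
  have h1 := Real.exp_pos r
  have h2 : (0:ℝ) < Real.exp r + (Real.exp r)⁻¹ := by positivity
  field_simp
  ring

lemma cosh_ZX (r : ℝ) :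
    Real.cosh (dist (ptZ r) (ptX r)) = Real.cosh r ^ 2 := by
  rw [UpperHalfPlane.cosh_dist']
  simp only [ptZ_re, ptZ_im, ptX_re, ptX_im, Real.cosh_eq, Real.sinh_eq, Real.exp_neg]
  have h1 := Real.exp_pos r
  have h2 : (0:ℝ) < Real.exp r + (Real.exp r)⁻¹ := by positivity
  field_simp
  ring

lemma cosh_ZY (r : ℝ) :
    Real.cosh (dist (ptZ r) (ptY r)) = Real.cosh r ^ 2 := by
  rw [UpperHalfPlane.cosh_dist']
  simp only [ptZ_re, ptZ_im, ptY_re, ptY_im, Real.cosh_eq, Real.sinh_eq, Real.exp_neg]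
  have h1 := Real.exp_pos r
  have h2 : (0:ℝ) < Real.exp r + (Real.exp r)⁻¹ := by positivity
  field_simp
  ring

/-- `cosh` is injective on nonnegative reals. -/
lemma eq_of_cosh_eq {d t : ℝ} (hd : 0 ≤ d) (ht : 0 ≤ t)
    (h : Real.cosh d = Real.cosh t) : d = t := by
  have h1 : |d| ≤ |t| := Real.cosh_le_cosh.mp h.le
  have h2 : |t| ≤ |d| := Real.cosh_le_cosh.mp h.ge
  rw [abs_of_nonneg hd, abs_of_nonneg ht] at h1 h2
  linarith

end NoHomothety

open NoHomothety

/-- The hyperbolic plane admits no surjective homothety with factor μ > 1. -/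
theorem no_surjective_homothety_of_hyperbolic_plane :
    ¬ ∃ (h : UpperHalfPlane → UpperHalfPlane) (μ : ℝ), 1 < μ ∧
      Function.Surjective h ∧
      ∀ x y : UpperHalfPlane, dist (h x) (h y) = μ * dist x y := by
  rintro ⟨h, μ, hμ, -, hdist⟩
  have hμ0 : 0 < μ := lt_trans one_pos hμ
  -- the function r ↦ dist (ptZ r) (ptX r)
  set a : ℝ → ℝ := fun r => dist (ptZ r) (ptX r) with ha_def
  have ha_nonneg : ∀ r, 0 ≤ a r := fun r => dist_nonneg
  have ha_cosh : ∀ r, Real.cosh (a r) = Real.cosh r ^ 2 := fun r => cosh_ZX r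
  -- distances of the explicit configuration, for r ≥ 0
  have hdists : ∀ r : ℝ, 0 ≤ r →
      dist (ptX r) ptI = r ∧ dist (ptY r) ptI = r ∧ dist (ptX r) (ptY r) = 2 * r ∧
      dist (ptZ r) ptI = r ∧ dist (ptZ r) (ptY r) = a r := by
    intro r hr
    refine ⟨eq_of_cosh_eq dist_nonneg hr (cosh_XI r),
      eq_of_cosh_eq dist_nonneg hr (cosh_YI r),
      eq_of_cosh_eq dist_nonneg (by linarith) ?_,
      eq_of_cosh_eq dist_nonneg hr (cosh_ZI r),
      eq_of_cosh_eq dist_nonneg (ha_nonneg r) ?_⟩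
    · rw [cosh_XY r, Real.cosh_two_mul]
      nlinarith [Real.cosh_sq r]
    · rw [cosh_ZY r, ha_cosh r]
  -- key functional equation : a (μ * r) = μ * a r for r > 0
  have key : ∀ r : ℝ, 0 < r → a (μ * r) = μ * a r := by
    intro r hr
    obtain ⟨hXI, hYI, hXY, hZI, hZY⟩ := hdists r hr.le
    set p : Fin 4 → ℍ := ![h (ptX r), h (ptY r), h ptI, h (ptZ r)] with hp
    have hA : (1 : ℝ) < Real.cosh (μ * r) := by
      rw [Real.one_lt_cosh]
      positivity
    have hrel : Real.cosh (μ * a r) = Real.cosh (μ * r) ^ 2 := by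
      refine cosh_relation p (Real.cosh (μ * r)) (Real.cosh (μ * a r)) hA ?_ ?_ ?_ ?_ ?_ ?_
      · show Real.cosh (dist (h (ptX r)) (h (ptY r))) = _
        rw [hdist, hXY, show μ * (2 * r) = 2 * (μ * r) by ring, Real.cosh_two_mul]
        nlinarith [Real.cosh_sq (μ * r)]
      · show Real.cosh (dist (h (ptX r)) (h ptI)) = _
        rw [hdist, hXI]
      · show Real.cosh (dist (h (ptY r)) (h ptI)) = _
        rw [hdist, hYI]
      · show Real.cosh (dist (h ptI) (h (ptZ r))) = _
        rw [hdist, dist_comm, hZI]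
      · show Real.cosh (dist (h (ptX r)) (h (ptZ r))) = _
        rw [hdist, dist_comm]
      · show Real.cosh (dist (h (ptY r)) (h (ptZ r))) = _
        rw [hdist, dist_comm, hZY]
    have : Real.cosh (a (μ * r)) = Real.cosh (μ * a r) := by
      rw [ha_cosh, hrel]
    exact eq_of_cosh_eq (ha_nonneg _) (by positivity) this
  -- a 1 < 2
  have ha1 : a 1 < 2 := by
    have h1 : Real.cosh (a 1) < Real.cosh 2 := by
      rw [ha_cosh, show (2 : ℝ) = 2 * 1 by norm_num, Real.cosh_two_mul]
      nlinarith [Real.one_lt_cosh.mpr (one_ne_zero : (1:ℝ) ≠ 0), Real.cosh_sq (1:ℝ)]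
    have := Real.cosh_lt_cosh.mp h1
    rw [abs_of_nonneg (ha_nonneg 1), abs_of_nonneg (by norm_num : (0:ℝ) ≤ 2)] at this
    exact this
  have hψ : 0 < 2 - a 1 := by linarith
  -- lower bound : a s ≥ 2 s - log 4 for s ≥ 0
  have hlow : ∀ s : ℝ, 0 ≤ s → 2 * s - Real.log 4 ≤ a s := by
    intro s hs
    have h1 : Real.cosh (a s) ≤ Real.exp (a s) := by
      rw [Real.cosh_eq]
      have : Real.exp (-(a s)) ≤ Real.exp (a s) :=
        Real.exp_le_exp.mpr (by linarith [ha_nonneg s])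
      linarith
    have h2 : Real.exp s / 2 ≤ Real.cosh s := by
      rw [Real.cosh_eq]
      have := (Real.exp_pos (-s)).le
      linarith
    have h3 : Real.exp (2 * s) / 4 ≤ Real.exp (a s) := by
      have : (Real.exp s / 2) ^ 2 ≤ Real.cosh s ^ 2 := by
        have := (Real.exp_pos s).le
        nlinarith
      rw [show Real.exp (2 * s) = Real.exp s ^ 2 by
        rw [show (2 : ℝ) * s = s + s by ring, Real.exp_add]; ring]
      nlinarith [ha_cosh s]
    have h4 : Real.exp (2 * s - Real.log 4) ≤ Real.exp (a s) := by
      rw [Real.exp_sub, Real.exp_log (by norm_num : (0:ℝ) < 4)]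
      exact h3
    exact Real.exp_le_exp.mp h4
  -- iterate the functional equation
  have hiter : ∀ n : ℕ, a (μ ^ n) = μ ^ n * a 1 := by
    intro n
    induction n with
    | zero => simp
    | succ n ih =>
      have hpow : 0 < μ ^ n := pow_pos hμ0 n
      calc a (μ ^ (n + 1)) = a (μ * μ ^ n) := by rw [pow_succ]; ring_nf
        _ = μ * a (μ ^ n) := key _ hpow
        _ = μ * (μ ^ n * a 1) := by rw [ih]
        _ = μ ^ (n + 1) * a 1 := by rw [pow_succ]; ring
  -- contradiction with exponential growth
  obtain ⟨n, hn⟩ := pow_unbounded_of_one_lt (Real.log 4 / (2 - a 1)) hμ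
  have hpow : 0 < μ ^ n := pow_pos hμ0 n
  have hb := hlow (μ ^ n) hpow.le
  rw [hiter n] at hb
  have : Real.log 4 < μ ^ n * (2 - a 1) := by
    rw [div_lt_iff₀ hψ] at hn
    linarith
  nlinarith
end
end

section
/- In the Cayley graph of BS(1, 2) = ⟨a, t | tat⁻¹ = a²⟩ with generating set {a, t}, for every r ≥ 1 and every H ∈ ℤ, if d(t^H, a^M t^x) ≤ r for some x ∈ ℤ and M ∈ ℤ, then |M| ≤ 2^{r − 1 + H}. -/
/-- The relator `t a t⁻¹ a⁻²` of the Baumslag–Solitar group BS(1,2), with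
`a = of false` and `t = of true`. -/
def bsRels : Set (FreeGroup Bool) :=
  { FreeGroup.of true * FreeGroup.of false * (FreeGroup.of true)⁻¹ *
      (FreeGroup.of false * FreeGroup.of false)⁻¹ }

/-- The Baumslag–Solitar group BS(1,2) = ⟨a, t | t a t⁻¹ = a²⟩. -/
abbrev BS12 : Type := PresentedGroup bsRels

/-- The generator `a` of BS(1,2). -/
def aBS : BS12 := PresentedGroup.of false

/-- The generator `t` of BS(1,2). -/
def tBS : BS12 := PresentedGroup.of true

/-- The word metric on a group with respect to a generating set `S`: the length of a
shortest word in `S ∪ S⁻¹` taking `g` to `h`. -/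
noncomputable def wordDist {G : Type*} [Group G] (S : Set G) (g h : G) : ℕ :=
  sInf {n | ∃ w : List G, w.length = n ∧ (∀ x ∈ w, x ∈ S ∨ x⁻¹ ∈ S) ∧ g * w.prod = h}

/-! BS(1,2) acts on `ℝ` by affine maps, `a` as `y ↦ y + 1` and `t` as `y ↦ 2 * y`. Evaluating
`t^H * w = a^M * t^x` at `0` gives `M = 2^H * (w • 0)`. Every generator or inverse at most
doubles `max |y| 1`, and the last letter of `w` moves `0` into `[-1, 1]`, so a word of length `n`
moves `0` by at most `2^(n-1)`. -/

theorem exists_word_of_wordDist_le {G : Type*} [Group G] {S : Set G} {g h : G} {r : ℕ}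
    (hgh : g⁻¹ * h ∈ Subgroup.closure S) (hd : wordDist S g h ≤ r) :
    ∃ w : List G, w.length ≤ r ∧ (∀ x ∈ w, x ∈ S ∨ x⁻¹ ∈ S) ∧ g * w.prod = h := by
  have hne : {n | ∃ w : List G, w.length = n ∧ (∀ x ∈ w, x ∈ S ∨ x⁻¹ ∈ S) ∧
      g * w.prod = h}.Nonempty := by
    rw [← Subgroup.mem_toSubmonoid, Subgroup.closure_toSubmonoid] at hgh
    obtain ⟨w, hw, hprod⟩ := Submonoid.exists_list_of_mem_closure hgh
    exact ⟨w.length, w, rfl, hw, by rw [hprod, mul_inv_cancel_left]⟩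
  obtain ⟨w, hlen, hw, hprod⟩ := Nat.sInf_mem hne
  exact ⟨w, hlen ▸ hd, hw, hprod⟩

noncomputable def bsGenPerm : Bool → Equiv.Perm ℝ
  | false => Equiv.addRight 1
  | true => MulAction.toPerm (Units.mk0 (2 : ℝ) two_ne_zero)

theorem lift_bsGenPerm_eq_one : ∀ r ∈ bsRels, FreeGroup.lift bsGenPerm r = 1 := by
  rintro r rfl
  ext y
  simp [bsGenPerm]
  ring

noncomputable def bsAffine : BS12 →* Equiv.Perm ℝ := PresentedGroup.toGroup lift_bsGenPerm_eq_one

theorem bsAffine_aBS : bsAffine aBS = Equiv.addRight 1 := PresentedGroup.toGroup.of _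

theorem bsAffine_tBS : bsAffine tBS = MulAction.toPermHom ℝˣ ℝ (Units.mk0 2 two_ne_zero) :=
  PresentedGroup.toGroup.of _

theorem bsAffine_aBS_zpow_apply (k : ℤ) (y : ℝ) : bsAffine (aBS ^ k) y = y + k := by
  simp [bsAffine_aBS]

theorem bsAffine_tBS_zpow_apply (k : ℤ) (y : ℝ) : bsAffine (tBS ^ k) y = 2 ^ k * y := by
  rw [map_zpow, bsAffine_tBS, ← map_zpow, MulAction.toPermHom_apply, MulAction.toPerm_apply,
    Units.smul_def]
  simp

theorem bsAffine_aBS_apply (y : ℝ) : bsAffine aBS y = y + 1 := by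
  simpa using bsAffine_aBS_zpow_apply 1 y

theorem bsAffine_tBS_apply (y : ℝ) : bsAffine tBS y = 2 * y := by
  simpa using bsAffine_tBS_zpow_apply 1 y

theorem bsAffine_aBS_inv_apply (y : ℝ) : bsAffine aBS⁻¹ y = y - 1 := by
  simpa [sub_eq_add_neg] using bsAffine_aBS_zpow_apply (-1) y

theorem bsAffine_tBS_inv_apply (y : ℝ) : bsAffine tBS⁻¹ y = y / 2 := by
  simpa [div_eq_inv_mul] using bsAffine_tBS_zpow_apply (-1) y

theorem abs_bsAffine_apply_le {g : BS12}
    (hg : g ∈ ({aBS, tBS} : Set BS12) ∨ g⁻¹ ∈ ({aBS, tBS} : Set BS12)) (y : ℝ) :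
    |bsAffine g y| ≤ max (2 * |y|) (|y| + 1) := by
  have hg' : g = aBS ∨ g = tBS ∨ g = aBS⁻¹ ∨ g = tBS⁻¹ := by
    simp only [Set.mem_insert_iff, Set.mem_singleton_iff, inv_eq_iff_eq_inv] at hg
    tauto
  rcases hg' with rfl | rfl | rfl | rfl
  · rw [bsAffine_aBS_apply]
    exact le_max_of_le_right ((abs_add_le y 1).trans_eq (by rw [abs_one]))
  · rw [bsAffine_tBS_apply, abs_mul, abs_two]
    exact le_max_left _ _
  · rw [bsAffine_aBS_inv_apply]
    exact le_max_of_le_right ((abs_sub y 1).trans_eq (by rw [abs_one]))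
  · rw [bsAffine_tBS_inv_apply, abs_div, abs_two]
    exact le_max_of_le_left (by linarith [abs_nonneg y])

theorem max_abs_bsAffine_apply_le {g : BS12}
    (hg : g ∈ ({aBS, tBS} : Set BS12) ∨ g⁻¹ ∈ ({aBS, tBS} : Set BS12)) (y : ℝ) :
    max |bsAffine g y| 1 ≤ 2 * max |y| 1 := by
  have hy := le_max_left |y| 1
  have h1 := le_max_right |y| 1
  exact max_le ((abs_bsAffine_apply_le hg y).trans (max_le (by linarith) (by linarith)))
    (by linarith)

theorem max_abs_bsAffine_prod_apply_le {w : List BS12}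
    (hw : ∀ g ∈ w, g ∈ ({aBS, tBS} : Set BS12) ∨ g⁻¹ ∈ ({aBS, tBS} : Set BS12)) (y : ℝ) :
    max |bsAffine w.prod y| 1 ≤ 2 ^ w.length * max |y| 1 := by
  induction w with
  | nil => simp
  | cons g w ih =>
    rw [List.prod_cons, map_mul, Equiv.Perm.mul_apply, List.length_cons, pow_succ']
    calc max |bsAffine g (bsAffine w.prod y)| 1 ≤ 2 * max |bsAffine w.prod y| 1 :=
          max_abs_bsAffine_apply_le (hw g List.mem_cons_self) _
      _ ≤ 2 * (2 ^ w.length * max |y| 1) := by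
          gcongr
          exact ih fun g hg => hw g (List.mem_cons_of_mem _ hg)
      _ = _ := by ring

theorem two_mul_abs_bsAffine_prod_zero_le {w : List BS12}
    (hw : ∀ g ∈ w, g ∈ ({aBS, tBS} : Set BS12) ∨ g⁻¹ ∈ ({aBS, tBS} : Set BS12)) :
    2 * |bsAffine w.prod 0| ≤ 2 ^ w.length := by
  obtain rfl | ⟨w, g, rfl⟩ := w.eq_nil_or_concat'
  · simp
  have hg0 : |bsAffine g 0| ≤ 1 := by
    simpa using abs_bsAffine_apply_le (hw g (by simp)) 0
  have hw' := max_abs_bsAffine_prod_apply_le (fun x hx => hw x (List.mem_append_left _ hx))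
    (bsAffine g 0)
  rw [max_eq_right hg0, mul_one] at hw'
  rw [List.prod_append, List.prod_singleton, map_mul, Equiv.Perm.mul_apply, List.length_append,
    List.length_singleton, pow_succ']
  exact mul_le_mul_of_nonneg_left ((le_max_left _ _).trans hw') zero_le_two

theorem bs12_horizontal_distance_bound_general
    (r : ℕ) (H M x : ℤ)
    (h : wordDist {aBS, tBS} (tBS ^ H) (aBS ^ M * tBS ^ x) ≤ r) :
    (|M| : ℝ) ≤ (2:ℝ) ^ ((r:ℤ) - 1 + H) := by
  have hgen {g : BS12} (hg : g ∈ ({aBS, tBS} : Set BS12)) : g ∈ Subgroup.closure {aBS, tBS} :=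
    Subgroup.subset_closure hg
  obtain ⟨w, hlen, hw, hprod⟩ := exists_word_of_wordDist_le
    (mul_mem (inv_mem (zpow_mem (hgen (by simp)) H))
      (mul_mem (zpow_mem (hgen (by simp)) M) (zpow_mem (hgen (by simp)) x))) h
  have hM : (M : ℝ) = 2 ^ H * bsAffine w.prod 0 := by
    simpa only [map_mul, Equiv.Perm.mul_apply, bsAffine_aBS_zpow_apply, bsAffine_tBS_zpow_apply,
      mul_zero, zero_add] using congrArg (fun g => bsAffine g 0) hprod.symm
  have hbound : 2 * |(M : ℝ)| ≤ 2 ^ ((r : ℤ) + H) := calc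
    2 * |(M : ℝ)| = 2 ^ H * (2 * |bsAffine w.prod 0|) := by
      rw [hM, abs_mul, abs_of_pos (zpow_pos two_pos H)]; ring
    _ ≤ 2 ^ H * 2 ^ r := by
      gcongr
      exact (two_mul_abs_bsAffine_prod_zero_le hw).trans (pow_le_pow_right₀ one_le_two hlen)
    _ = 2 ^ ((r : ℤ) + H) := by rw [zpow_add₀ two_ne_zero, zpow_natCast, mul_comm]
  rw [show (r : ℤ) - 1 + H = (r + H) - 1 by ring, zpow_sub_one₀ two_ne_zero]
  linarith

/-- Horizontal displacement bound in BS(1,2): a ball of radius `r` around `t^H`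
reaches `a^M t^x` only if `|M| ≤ 2^(r - 1 + H)`. -/
theorem bs12_horizontal_distance_bound
    (r : ℕ) (hr : 1 ≤ r) (H M x : ℤ)
    (h : wordDist {aBS, tBS} (tBS ^ H) (aBS ^ M * tBS ^ x) ≤ r) :
    (|M| : ℝ) ≤ (2:ℝ) ^ ((r:ℤ) - 1 + H) :=
  bs12_horizontal_distance_bound_general r H M x h
end
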